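/- Let Γ = (G, l) be a metric graph with canonical model (G₀, l₀) such that |V(G₀)| ≥ 3. If Γ is 3-edge connected, then Γ is not divisorially hyperelliptic, i.e. W¹₂(Γ) = ∅: no divisor of degree 2 on Γ has rank ≥ 1. -/

import Mathlib

open scoped Classical

/-!
Combinatorial models of metric graphs: a finite (multi-)graph together with a
positive length for each edge.  A metric graph is determined by such a model;
its canonical model is the (unique) model with all valences at least `3`.
-/

structure MetricGraphModel : Type 1 where
  V : Type
  E : Type
  fV : Fintype V
  fE : Fintype E
  dV : DecidableEq V
  dE : DecidableEq E
  src : E → V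
  tgt : E → V
  len : E → ℝ
  len_pos : ∀ e, 0 < len e

attribute [instance] MetricGraphModel.fV MetricGraphModel.fE
attribute [instance] MetricGraphModel.dV MetricGraphModel.dE

namespace MetricGraphModel

/-- An edge is incident to a vertex. -/
def Incident (Γ : MetricGraphModel) (e : Γ.E) (v : Γ.V) : Prop :=
  Γ.src e = v ∨ Γ.tgt e = v

/-- Incidence multiplicity (a loop counts twice). -/
def incid (Γ : MetricGraphModel) (e : Γ.E) (v : Γ.V) : ℕ :=
  (if Γ.src e = v then 1 else 0) + (if Γ.tgt e = v then 1 else 0)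

/-- The valence of a vertex. -/
def valence (Γ : MetricGraphModel) (v : Γ.V) : ℕ := ∑ e : Γ.E, Γ.incid e v

def dSrc (Γ : MetricGraphModel) (x : Γ.E × Bool) : Γ.V :=
  if x.2 then Γ.src x.1 else Γ.tgt x.1

def dTgt (Γ : MetricGraphModel) (x : Γ.E × Bool) : Γ.V :=
  if x.2 then Γ.tgt x.1 else Γ.src x.1

/-- Walks, given as lists of oriented edges. -/
def IsWalk (Γ : MetricGraphModel) : List (Γ.E × Bool) → Γ.V → Γ.V → Prop
  | [], u, v => u = v
  | x :: xs, u, v => Γ.dSrc x = u ∧ IsWalk Γ xs (Γ.dTgt x) v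

def Connected (Γ : MetricGraphModel) : Prop :=
  Nonempty Γ.V ∧ ∀ u v : Γ.V, ∃ L, IsWalk Γ L u v

/-- Removing any set of at most `2` edges leaves the graph connected. -/
def ThreeEdgeConnected (Γ : MetricGraphModel) : Prop :=
  ∀ S : Finset Γ.E, S.card ≤ 2 → ∀ u v : Γ.V,
    ∃ L, IsWalk Γ L u v ∧ ∀ x ∈ L, x.1 ∉ S

def Loopless (Γ : MetricGraphModel) : Prop := ∀ e : Γ.E, Γ.src e ≠ Γ.tgt e

/-- A canonical model: connected, with all valences at least `3`. -/
def IsCanonical (Γ : MetricGraphModel) : Prop :=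
  Γ.Connected ∧ ∀ v : Γ.V, 3 ≤ Γ.valence v

/-- A (model of a) metric tree. -/
def IsTreeModel (Γ : MetricGraphModel) : Prop :=
  Γ.Connected ∧ Fintype.card Γ.E + 1 = Fintype.card Γ.V

/-- Points of the associated metric graph: vertices together with interior
points of edges (parametrised by their distance from the source). -/
abbrev Pt (Γ : MetricGraphModel) : Type :=
  Γ.V ⊕ Σ e : Γ.E, {t : ℝ // 0 < t ∧ t < Γ.len e}

end MetricGraphModel

open MetricGraphModel

/-- The (canonical) loopless model: insert a vertex at the midpoint of every loop. -/
noncomputable def looplessModel (Γ : MetricGraphModel) : MetricGraphModel where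
  V := Γ.V ⊕ {e : Γ.E // Γ.src e = Γ.tgt e}
  E := {e : Γ.E // Γ.src e ≠ Γ.tgt e} ⊕ ({e : Γ.E // Γ.src e = Γ.tgt e} × Bool)
  fV := inferInstance
  fE := inferInstance
  dV := inferInstance
  dE := inferInstance
  src := fun x => match x with
    | Sum.inl e => Sum.inl (Γ.src e.1)
    | Sum.inr p => Sum.inl (Γ.src p.1.1)
  tgt := fun x => match x with
    | Sum.inl e => Sum.inl (Γ.tgt e.1)
    | Sum.inr p => Sum.inr p.1
  len := fun x => match x with
    | Sum.inl e => Γ.len e.1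
    | Sum.inr p => Γ.len p.1.1 / 2
  len_pos := by
    rintro (e | p)
    · exact Γ.len_pos e.1
    · have h := Γ.len_pos p.1.1
      show 0 < Γ.len p.1.1 / 2
      linarith

/-- The metric subgraph obtained by removing all loops. -/
noncomputable def deloop (Γ : MetricGraphModel) : MetricGraphModel where
  V := Γ.V
  E := {e : Γ.E // Γ.src e ≠ Γ.tgt e}
  fV := inferInstance
  fE := inferInstance
  dV := inferInstance
  dE := inferInstance
  src := fun e => Γ.src e.1
  tgt := fun e => Γ.tgt e.1
  len := fun e => Γ.len e.1
  len_pos := fun e => Γ.len_pos e.1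

namespace MetricGraphModel

/-! ### Divisors and rational functions -/

abbrev Divisor (Γ : MetricGraphModel) : Type := Γ.Pt → ℤ

noncomputable def divDegree {Γ : MetricGraphModel} (D : Divisor Γ) : ℤ := finsum D

def DivEffective {Γ : MetricGraphModel} (D : Divisor Γ) : Prop := ∀ p, 0 ≤ D p

def DivFinSupp {Γ : MetricGraphModel} (D : Divisor Γ) : Prop :=
  (Function.support D).Finite

noncomputable def unitDiv (Γ : MetricGraphModel) (p : Γ.Pt) : Divisor Γ :=
  fun q => if q = p then 1 else 0

/-- `f` is continuous piecewise linear with integer slopes on `[0, L]`. -/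
def PLInt (f : ℝ → ℝ) (L : ℝ) : Prop :=
  ∃ n : ℕ, ∃ t : Fin (n + 1) → ℝ, t 0 = 0 ∧ t (Fin.last n) = L ∧ StrictMono t ∧
    ∀ i : Fin n, ∃ m : ℤ, ∀ s ∈ Set.Icc (t i.castSucc) (t i.succ),
      f s = f (t i.castSucc) + (m : ℝ) * (s - t i.castSucc)

/-- The (integer) outgoing slope of `f` to the right of `t0`. -/
noncomputable def slopeR (f : ℝ → ℝ) (t0 : ℝ) : ℤ :=
  if h : ∃ m : ℤ, ∃ ε : ℝ, 0 < ε ∧ ∀ s ∈ Set.Icc t0 (t0 + ε),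
      f s = f t0 + (m : ℝ) * (s - t0)
  then h.choose else 0

/-- The (integer) outgoing slope of `f` to the left of `t0`. -/
noncomputable def slopeL (f : ℝ → ℝ) (t0 : ℝ) : ℤ :=
  if h : ∃ m : ℤ, ∃ ε : ℝ, 0 < ε ∧ ∀ s ∈ Set.Icc (t0 - ε) t0,
      f s = f t0 + (m : ℝ) * (t0 - s)
  then h.choose else 0

/-- A rational function: continuous, piecewise linear with integer slopes. -/
structure RationalFunction (Γ : MetricGraphModel) where
  vVal : Γ.V → ℝ
  eFun : Γ.E → ℝ → ℝ
  pl : ∀ e, PLInt (eFun e) (Γ.len e)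
  srcVal : ∀ e, eFun e 0 = vVal (Γ.src e)
  tgtVal : ∀ e, eFun e (Γ.len e) = vVal (Γ.tgt e)

/-- The principal divisor of a rational function: the sum of the outgoing
slopes at every point. -/
noncomputable def ratDiv {Γ : MetricGraphModel} (f : RationalFunction Γ) : Divisor Γ :=
  fun p => match p with
  | Sum.inl v => ∑ e : Γ.E,
      ((if Γ.src e = v then slopeR (f.eFun e) 0 else 0) +
       (if Γ.tgt e = v then slopeL (f.eFun e) (Γ.len e) else 0))
  | Sum.inr q => slopeR (f.eFun q.1) q.2.1 + slopeL (f.eFun q.1) q.2.1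

/-- Evaluation of a rational function at a point of the metric graph. -/
def ratEval {Γ : MetricGraphModel} (f : RationalFunction Γ) : Γ.Pt → ℝ
  | Sum.inl v => f.vVal v
  | Sum.inr q => f.eFun q.1 q.2.1

/-- Linear equivalence of divisors. -/
def LinEquiv (Γ : MetricGraphModel) (D D' : Divisor Γ) : Prop :=
  ∃ f : RationalFunction Γ, ∀ p, D p = D' p + ratDiv f p

/-- The Baker–Norine rank of `D` is at least `k`. -/
def RankGE (Γ : MetricGraphModel) (D : Divisor Γ) (k : ℕ) : Prop :=
  ∀ A : Divisor Γ, DivEffective A → DivFinSupp A → divDegree A = (k : ℤ) →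
    ∃ B : Divisor Γ, DivEffective B ∧ DivFinSupp B ∧
      LinEquiv Γ (fun p => D p - A p) B

/-- `W¹₃(Γ) ≠ ∅`: some divisor of degree `3` has rank at least `1`. -/
def DivisoriallyTrigonal (Γ : MetricGraphModel) : Prop :=
  ∃ D : Divisor Γ, DivFinSupp D ∧ divDegree D = 3 ∧ RankGE Γ D 1

end MetricGraphModel

/-! ### Harmonic morphisms of metric graphs -/

/-- An indexed morphism of metric graph models.  An edge is either mapped onto
an edge (with an integer stretching index `mu`) or contracted to a vertex. -/
structure MGMorphism (Γ Δ : MetricGraphModel) where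
  vMap : Γ.V → Δ.V
  eMap : Γ.E → Δ.E ⊕ Δ.V
  mu : Γ.E → ℕ
  mu_zero : ∀ e, mu e = 0 ↔ ∃ v', eMap e = Sum.inr v'
  contract_ok : ∀ e v', eMap e = Sum.inr v' →
    vMap (Γ.src e) = v' ∧ vMap (Γ.tgt e) = v'
  edge_ok : ∀ e e', eMap e = Sum.inl e' →
    ((vMap (Γ.src e) = Δ.src e' ∧ vMap (Γ.tgt e) = Δ.tgt e') ∨
     (vMap (Γ.src e) = Δ.tgt e' ∧ vMap (Γ.tgt e) = Δ.src e'))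
  len_ok : ∀ e e', eMap e = Sum.inl e' → (mu e : ℝ) * Γ.len e = Δ.len e'

namespace MGMorphism

variable {Γ Δ : MetricGraphModel}

/-- The local sum `m_φ(v)` computed along a fixed edge `e'` at `φ(v)`. -/
noncomputable def locDeg (φ : MGMorphism Γ Δ) (v : Γ.V) (e' : Δ.E) : ℕ :=
  ∑ e : Γ.E, if φ.eMap e = Sum.inl e' then φ.mu e * Γ.incid e v else 0

def Harmonic (φ : MGMorphism Γ Δ) : Prop :=
  ∀ (v : Γ.V) (e₁ e₂ : Δ.E),
    Δ.Incident e₁ (φ.vMap v) → Δ.Incident e₂ (φ.vMap v) →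
      locDeg φ v e₁ = locDeg φ v e₂

def Nondegenerate (φ : MGMorphism Γ Δ) : Prop :=
  ∀ v : Γ.V, ∃ e' : Δ.E, Δ.Incident e' (φ.vMap v) ∧ 1 ≤ locDeg φ v e'

def HasDegree (φ : MGMorphism Γ Δ) (d : ℕ) : Prop :=
  ∀ e' : Δ.E, (∑ e : Γ.E, if φ.eMap e = Sum.inl e' then φ.mu e else 0) = d

/-- The horizontal multiplicity `m_φ(v)` at a vertex. -/
noncomputable def mVal (φ : MGMorphism Γ Δ) (v : Γ.V) : ℕ :=
  (Finset.univ.filter fun e' : Δ.E => Δ.Incident e' (φ.vMap v)).sup (locDeg φ v)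

end MGMorphism

/-! ### Isomorphisms, subdivisions and tropical modifications -/

def sameEndsMap (Γ Δ : MetricGraphModel) (f : Γ.V → Δ.V) (e : Γ.E) (e' : Δ.E) : Prop :=
  (f (Γ.src e) = Δ.src e' ∧ f (Γ.tgt e) = Δ.tgt e') ∨
  (f (Γ.src e) = Δ.tgt e' ∧ f (Γ.tgt e) = Δ.src e')

structure MGMIso (Γ Δ : MetricGraphModel) where
  vEquiv : Γ.V ≃ Δ.V
  eEquiv : Γ.E ≃ Δ.E
  ends : ∀ e, sameEndsMap Γ Δ (fun v => vEquiv v) e (eEquiv e)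
  len_eq : ∀ e, Δ.len (eEquiv e) = Γ.len e

/-- Deletion of a leaf (a valence-one vertex together with its edge). -/
def LeafDeletion (Δ Δ' : MetricGraphModel) : Prop :=
  ∃ (v₀ : Δ.V) (e₀ : Δ.E), Δ.valence v₀ = 1 ∧ Δ.Incident e₀ v₀ ∧
    ∃ (fv : Δ'.V ≃ {v : Δ.V // v ≠ v₀}) (fe : Δ'.E ≃ {e : Δ.E // e ≠ e₀}),
      (∀ e : Δ'.E, sameEndsMap Δ' Δ (fun v => (fv v).1) e (fe e).1) ∧
      ∀ e : Δ'.E, Δ.len (fe e).1 = Δ'.len e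

/-- Suppression of a valence-two vertex, merging its two edges and adding
their lengths. -/
def SeriesReduction (Δ Δ' : MetricGraphModel) : Prop :=
  ∃ (v₀ : Δ.V) (e₁ e₂ : Δ.E) (u₁ u₂ : Δ.V),
    e₁ ≠ e₂ ∧ Δ.valence v₀ = 2 ∧ u₁ ≠ v₀ ∧ u₂ ≠ v₀ ∧
    ({Δ.src e₁, Δ.tgt e₁} : Set Δ.V) = {v₀, u₁} ∧
    ({Δ.src e₂, Δ.tgt e₂} : Set Δ.V) = {v₀, u₂} ∧
    ∃ (fv : Δ'.V ≃ {v : Δ.V // v ≠ v₀}) (ebar : Δ'.E)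
      (fe : {e : Δ'.E // e ≠ ebar} ≃ {e : Δ.E // e ≠ e₁ ∧ e ≠ e₂}),
      Δ'.len ebar = Δ.len e₁ + Δ.len e₂ ∧
      ({(fv (Δ'.src ebar)).1, (fv (Δ'.tgt ebar)).1} : Set Δ.V) = {u₁, u₂} ∧
      (∀ e : {e : Δ'.E // e ≠ ebar},
        sameEndsMap Δ' Δ (fun v => (fv v).1) e.1 (fe e).1) ∧
      ∀ e : {e : Δ'.E // e ≠ ebar}, Δ.len (fe e).1 = Δ'.len e.1

def ReductionStep (Δ Δ' : MetricGraphModel) : Prop :=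
  LeafDeletion Δ Δ' ∨ SeriesReduction Δ Δ' ∨ Nonempty (MGMIso Δ Δ')

/-- `Δ` reduces to `Γ` by deleting leaves and suppressing valence-two
vertices.  When `Γ` is a canonical model, this says exactly that the metric
graph of `Δ` is a tropical modification of the metric graph of `Γ`. -/
def Reduces (Δ Γ : MetricGraphModel) : Prop :=
  Relation.ReflTransGen ReductionStep Δ Γ

def IsTropicalModificationOf (Δ Γ : MetricGraphModel) : Prop := Reduces Δ Γ

def ModelStep (Δ Δ' : MetricGraphModel) : Prop :=
  SeriesReduction Δ Δ' ∨ Nonempty (MGMIso Δ Δ')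

/-- `Δ` and `Γ` are models of the same metric graph (no trees added). -/
def SameMetricGraph (Δ Γ : MetricGraphModel) : Prop :=
  Relation.ReflTransGen ModelStep Δ Γ

/-- `Γ` is trigonal: a tropical modification of `Γ` admits a non-degenerate
harmonic morphism of degree `3` onto a metric tree. -/
def Trigonal (Γ : MetricGraphModel) : Prop :=
  ∃ Δ T : MetricGraphModel, IsTropicalModificationOf Δ Γ ∧ T.IsTreeModel ∧
    ∃ φ : MGMorphism Δ T,
      MGMorphism.Harmonic φ ∧ MGMorphism.Nondegenerate φ ∧ MGMorphism.HasDegree φ 3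

/-- `Γ` is strictly trigonal: `Γ` itself (i.e. some model of the same metric
graph) admits a non-degenerate harmonic morphism of degree `3` onto a metric
tree. -/
def StrictlyTrigonal (Γ : MetricGraphModel) : Prop :=
  ∃ Δ T : MetricGraphModel, SameMetricGraph Δ Γ ∧ T.IsTreeModel ∧
    ∃ φ : MGMorphism Δ T,
      MGMorphism.Harmonic φ ∧ MGMorphism.Nondegenerate φ ∧ MGMorphism.HasDegree φ 3

/-! ### Embeddings up to subdivision (for tropical modifications of morphisms) -/

structure SubEmbed (G Δ : MetricGraphModel) where
  v : G.V → Δ.V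
  inj : Function.Injective v
  path : G.E → List (Δ.E × Bool)
  ne : ∀ e, path e ≠ []
  walk : ∀ e, MetricGraphModel.IsWalk Δ (path e) (v (G.src e)) (v (G.tgt e))
  len_sum : ∀ e, ((path e).map fun x => Δ.len x.1).sum = G.len e

/-! ### Pullback of points along a harmonic morphism -/

/-- `φ` maps the point `p` of `Γ` to the point `t` of `Δ`. -/
def MapsToPt {Γ Δ : MetricGraphModel} (φ : MGMorphism Γ Δ) : Γ.Pt → Δ.Pt → Prop
  | Sum.inl v, Sum.inl t => φ.vMap v = t
  | Sum.inl _, Sum.inr _ => False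
  | Sum.inr q, Sum.inl t => φ.eMap q.1 = Sum.inr t
  | Sum.inr q, Sum.inr r =>
      φ.eMap q.1 = Sum.inl r.1 ∧
      ((φ.vMap (Γ.src q.1) = Δ.src r.1 ∧ (r.2.1 : ℝ) = (φ.mu q.1 : ℝ) * (q.2.1 : ℝ)) ∨
       (φ.vMap (Γ.src q.1) = Δ.tgt r.1 ∧
         (r.2.1 : ℝ) = Δ.len r.1 - (φ.mu q.1 : ℝ) * (q.2.1 : ℝ)))

/-- Horizontal multiplicity of a point. -/
noncomputable def hmult {Γ Δ : MetricGraphModel} (φ : MGMorphism Γ Δ) : Γ.Pt → ℕ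
  | Sum.inl v => MGMorphism.mVal φ v
  | Sum.inr q => φ.mu q.1

/-- The pullback divisor `φ*(t)` of a point `t`. -/
noncomputable def pullbackDiv {Γ Δ : MetricGraphModel} (φ : MGMorphism Γ Δ)
    (t : Δ.Pt) : MetricGraphModel.Divisor Γ :=
  fun p => if MapsToPt φ p t then (hmult φ p : ℤ) else 0

/-! ### Points on edges, admissible representatives, consecutive divisors -/

open MetricGraphModel

/-- `p` is an interior point of the edge `e`. -/
def interiorOf (Γ : MetricGraphModel) (e : Γ.E) (p : Γ.Pt) : Prop :=
  ∃ q : {t : ℝ // 0 < t ∧ t < Γ.len e}, p = Sum.inr ⟨e, q⟩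

def SameEdgeInterior (Γ : MetricGraphModel) (p q : Γ.Pt) : Prop :=
  ∃ e : Γ.E, interiorOf Γ e p ∧ interiorOf Γ e q

/-- `Dx` is the admissible representative of `D` with respect to the vertex
`x`: it is linearly equivalent to `D`, of the form `x + x₁ + x₂`, and `x₁, x₂`
do not both lie in the interior of one edge. -/
def AdmissibleRep (Γ : MetricGraphModel) (D : Divisor Γ) (x : Γ.V)
    (Dx : Divisor Γ) : Prop :=
  LinEquiv Γ D Dx ∧
  ∃ p q : Γ.Pt,
    Dx = (fun z => unitDiv Γ (Sum.inl x) z + unitDiv Γ p z + unitDiv Γ q z) ∧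
    ¬ SameEdgeInterior Γ p q

/-- `p` lies on the (closed) edge `e` at distance `s` from its source. -/
def LiesOn (Γ : MetricGraphModel) (e : Γ.E) (p : Γ.Pt) (s : ℝ) : Prop :=
  (p = Sum.inl (Γ.src e) ∧ s = 0) ∨ (p = Sum.inl (Γ.tgt e) ∧ s = Γ.len e) ∨
  (∃ h : 0 < s ∧ s < Γ.len e, p = Sum.inr ⟨e, ⟨s, h⟩⟩)

/-- Vertices of the refinement `G_D`: vertices of `G₀` together with all
support points of admissible representatives of `D`. -/
def SpecialPt (Γ : MetricGraphModel) (D : Divisor Γ) (p : Γ.Pt) : Prop :=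
  (∃ v : Γ.V, p = Sum.inl v) ∨
  ∃ (x : Γ.V) (Dx : Divisor Γ), AdmissibleRep Γ D x Dx ∧ Dx p ≠ 0

/-- An edge of the refinement `G_D` joining the supports of `Dx` and `Dy`:
a segment of an edge of `Γ` between a point of `Supp Dx` and a point of
`Supp Dy` containing no vertex of `G_D` in its interior. -/
def ConnSeg (Γ : MetricGraphModel) (D Dx Dy : Divisor Γ) (e : Γ.E) (s t : ℝ) : Prop :=
  s < t ∧ ∃ p q : Γ.Pt, LiesOn Γ e p s ∧ LiesOn Γ e q t ∧
    ((Dx p ≠ 0 ∧ Dy q ≠ 0) ∨ (Dy p ≠ 0 ∧ Dx q ≠ 0)) ∧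
    ∀ r, s < r → r < t → ∀ z, LiesOn Γ e z r → ¬ SpecialPt Γ D z

/-- Two admissible representatives are consecutive. -/
def Consecutive (Γ : MetricGraphModel) (D Dx Dy : Divisor Γ) : Prop :=
  Dx ≠ Dy ∧ ∃ e s t, ConnSeg Γ D Dx Dy e s t

/-- The open segment of `e` between parameters `s` and `t`, as a set of points. -/
def segSet (Γ : MetricGraphModel) (e : Γ.E) (s t : ℝ) : Set Γ.Pt :=
  {z | ∃ r, s < r ∧ r < t ∧ LiesOn Γ e z r}

/-- Two points can be joined inside one edge avoiding the removed set `R`. -/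
def AvoidAdj (Γ : MetricGraphModel) (R : Set Γ.Pt) (p q : Γ.Pt) : Prop :=
  ∃ (e : Γ.E) (s t : ℝ), s ≤ t ∧
    ((LiesOn Γ e p s ∧ LiesOn Γ e q t) ∨ (LiesOn Γ e q s ∧ LiesOn Γ e p t)) ∧
    ∀ r, s < r → r < t → ∀ z, LiesOn Γ e z r → z ∉ R

/-- The complement of `R` in the metric graph is connected. -/
def ComplementConnected (Γ : MetricGraphModel) (R : Set Γ.Pt) : Prop :=
  ∀ p q : Γ.Pt, p ∉ R → q ∉ R →
    Relation.ReflTransGen (fun a b => a ∉ R ∧ b ∉ R ∧ AvoidAdj Γ R a b) p q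

/-! ### Minimizing/maximizing sets of a rational function -/

def minSet {Γ : MetricGraphModel} (f : RationalFunction Γ) : Set Γ.Pt :=
  {p | ∀ q, ratEval f p ≤ ratEval f q}

def maxSet {Γ : MetricGraphModel} (f : RationalFunction Γ) : Set Γ.Pt :=
  {p | ∀ q, ratEval f q ≤ ratEval f p}

/-- `p` is a boundary point of `A`: it belongs to `A` and there are points of
the complement arbitrarily close to it along some edge. -/
def InBoundary (Γ : MetricGraphModel) (A : Set Γ.Pt) (p : Γ.Pt) : Prop :=
  p ∈ A ∧ ∃ (e : Γ.E) (s : ℝ), LiesOn Γ e p s ∧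
    ∀ ε : ℝ, 0 < ε → ∃ r z, |r - s| < ε ∧ LiesOn Γ e z r ∧ z ∉ A

/-- There is an edge leaving `A` at `p`, in the direction of `e` at parameter
`s` (increasing if `b = true`, decreasing if `b = false`). -/
def ExitsAt (Γ : MetricGraphModel) (A : Set Γ.Pt) (p : Γ.Pt) (e : Γ.E)
    (s : ℝ) (b : Bool) : Prop :=
  LiesOn Γ e p s ∧
  (b = true → ∃ ε : ℝ, 0 < ε ∧ s + ε ≤ Γ.len e ∧
    ∀ r, s < r → r < s + ε → ∀ z, LiesOn Γ e z r → z ∉ A) ∧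
  (b = false → ∃ ε : ℝ, 0 < ε ∧ 0 ≤ s - ε ∧
    ∀ r, s - ε < r → r < s → ∀ z, LiesOn Γ e z r → z ∉ A)

/-!
Let `D` have degree `2` and rank at least `1`. Every vertex `v` lies in an effective
representative `D - div f_v` of the class of `D`. Two of them differ by `div h`, `h = f_w - f_v`,
and `h` attains its minimum at every vertex: each edge leaving the minimum locus of `h` has an
outgoing slope `≥ 1` there, which is counted by the effective divisor `D - div f_v` of degree
`2`, so by `3`-edge connectivity the locus cannot separate two vertices; and a minimum attained
only inside an edge has two exits there, which together with `v` would give degree `3`.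
Applied to `h` and to `-h` this makes `h` constant, so all these representatives coincide, and
the common one contains three distinct vertices.
-/

section General

variable {M : Type*} [AddCommMonoid M]

theorem finsum_sum_type {α β : Type*} {f : α ⊕ β → M} (hf : (Function.support f).Finite) :
    ∑ᶠ x, f x = ∑ᶠ a, f (Sum.inl a) + ∑ᶠ b, f (Sum.inr b) := by
  rw [← finsum_mem_univ, ← Set.range_inl_union_range_inr,
    finsum_mem_union' Set.isCompl_range_inl_range_inr.disjoint
      (hf.subset Set.inter_subset_right) (hf.subset Set.inter_subset_right),
    finsum_mem_range Sum.inl_injective, finsum_mem_range Sum.inr_injective]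

theorem finsum_sigma {ι : Type*} [Finite ι] {κ : ι → Type*} {f : (Σ i, κ i) → M}
    (hf : (Function.support f).Finite) : ∑ᶠ x, f x = ∑ᶠ i, ∑ᶠ k, f ⟨i, k⟩ := by
  have hcover : (⋃ i, Set.range (Sigma.mk i) ∩ Function.support f) = Function.support f := by
    rw [← Set.iUnion_inter,
      Set.iUnion_eq_univ_iff.mpr fun x : Σ i, κ i => ⟨x.1, Set.mem_range_self x.2⟩,
      Set.univ_inter]
  rw [← finsum_mem_support, ← hcover,
    finsum_mem_iUnion ?_ fun i => hf.subset Set.inter_subset_right]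
  · simp only [finsum_mem_inter_support, finsum_mem_range sigma_mk_injective]
  · intro i j hij
    refine Set.disjoint_left.mpr fun x hi hj => hij ?_
    obtain ⟨⟨k, rfl⟩, -⟩ := hi
    obtain ⟨⟨k', hk'⟩, -⟩ := hj
    exact (congrArg Sigma.fst hk').symm

theorem exists_next_mem {α : Type*} [LinearOrder α] {T : Finset α} {s b : α} (hb : b ∈ T)
    (hsb : s < b) : ∃ q ∈ T, s < q ∧ q ≤ b ∧ ∀ u ∈ T, u ∉ Set.Ioo s q := by
  have hne : (T.filter (s < ·)).Nonempty := ⟨b, Finset.mem_filter.mpr ⟨hb, hsb⟩⟩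
  obtain ⟨hqT, hsq⟩ := Finset.mem_filter.mp ((T.filter (s < ·)).min'_mem hne)
  refine ⟨_, hqT, hsq, Finset.min'_le _ _ (Finset.mem_filter.mpr ⟨hb, hsb⟩),
    fun u hu hsu => ?_⟩
  exact (Finset.min'_le _ u (Finset.mem_filter.mpr ⟨hu, hsu.1⟩)).not_gt hsu.2

theorem exists_prev_mem {α : Type*} [LinearOrder α] {T : Finset α} {a s : α} (ha : a ∈ T)
    (has : a < s) : ∃ p ∈ T, a ≤ p ∧ p < s ∧ ∀ u ∈ T, u ∉ Set.Ioo p s := by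
  have hne : (T.filter (· < s)).Nonempty := ⟨a, Finset.mem_filter.mpr ⟨ha, has⟩⟩
  obtain ⟨hpT, hps⟩ := Finset.mem_filter.mp ((T.filter (· < s)).max'_mem hne)
  refine ⟨_, hpT, Finset.le_max' _ _ (Finset.mem_filter.mpr ⟨ha, has⟩), hps,
    fun u hu hus => ?_⟩
  exact (Finset.le_max' _ u (Finset.mem_filter.mpr ⟨hu, hus.2⟩)).not_gt hus.1

end General

namespace MetricGraphModel

open Set

section OneSidedSlopes

variable {f g : ℝ → ℝ} {t : ℝ} {m m' : ℤ}

def HasRightSlope (f : ℝ → ℝ) (t : ℝ) (m : ℤ) : Prop :=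
  ∃ ε : ℝ, 0 < ε ∧ ∀ s ∈ Set.Icc t (t + ε), f s = f t + (m : ℝ) * (s - t)

def HasLeftSlope (f : ℝ → ℝ) (t : ℝ) (m : ℤ) : Prop :=
  ∃ ε : ℝ, 0 < ε ∧ ∀ s ∈ Set.Icc (t - ε) t, f s = f t + (m : ℝ) * (t - s)

theorem HasRightSlope.unique (h : HasRightSlope f t m) (h' : HasRightSlope f t m') : m = m' := by
  obtain ⟨ε, hε, hf⟩ := h
  obtain ⟨ε', hε', hf'⟩ := h'
  have hδ : 0 < min ε ε' := lt_min hε hε'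
  have := (hf (t + min ε ε') ⟨by linarith, by linarith [min_le_left ε ε']⟩).symm.trans
    (hf' (t + min ε ε') ⟨by linarith, by linarith [min_le_right ε ε']⟩)
  exact_mod_cast mul_right_cancel₀ hδ.ne'
    (by linarith : (m : ℝ) * min ε ε' = m' * min ε ε')

theorem HasLeftSlope.unique (h : HasLeftSlope f t m) (h' : HasLeftSlope f t m') : m = m' := by
  obtain ⟨ε, hε, hf⟩ := h
  obtain ⟨ε', hε', hf'⟩ := h'
  have hδ : 0 < min ε ε' := lt_min hε hε'
  have := (hf (t - min ε ε') ⟨by linarith [min_le_left ε ε'], by linarith⟩).symm.trans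
    (hf' (t - min ε ε') ⟨by linarith [min_le_right ε ε'], by linarith⟩)
  exact_mod_cast mul_right_cancel₀ hδ.ne'
    (by linarith : (m : ℝ) * min ε ε' = m' * min ε ε')

theorem HasRightSlope.slopeR_eq (h : HasRightSlope f t m) : slopeR f t = m := by
  have hex : ∃ m, HasRightSlope f t m := ⟨m, h⟩
  exact (dif_pos hex).trans (hex.choose_spec.unique h)

theorem HasLeftSlope.slopeL_eq (h : HasLeftSlope f t m) : slopeL f t = m := by
  have hex : ∃ m, HasLeftSlope f t m := ⟨m, h⟩
  exact (dif_pos hex).trans (hex.choose_spec.unique h)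

theorem HasRightSlope.sub (hf : HasRightSlope f t m) (hg : HasRightSlope g t m') :
    HasRightSlope (fun s => f s - g s) t (m - m') := by
  obtain ⟨ε, hε, hf⟩ := hf
  obtain ⟨ε', hε', hg⟩ := hg
  refine ⟨min ε ε', lt_min hε hε', fun s hs => ?_⟩
  beta_reduce
  rw [hf s ⟨hs.1, hs.2.trans (by linarith [min_le_left ε ε'])⟩,
    hg s ⟨hs.1, hs.2.trans (by linarith [min_le_right ε ε'])⟩]
  push_cast
  ring

theorem HasLeftSlope.sub (hf : HasLeftSlope f t m) (hg : HasLeftSlope g t m') :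
    HasLeftSlope (fun s => f s - g s) t (m - m') := by
  obtain ⟨ε, hε, hf⟩ := hf
  obtain ⟨ε', hε', hg⟩ := hg
  refine ⟨min ε ε', lt_min hε hε', fun s hs => ?_⟩
  beta_reduce
  rw [hf s ⟨by linarith [hs.1, min_le_left ε ε'], hs.2⟩,
    hg s ⟨by linarith [hs.1, min_le_right ε ε'], hs.2⟩]
  push_cast
  ring

theorem slopeR_sub (hf : ∃ m, HasRightSlope f t m) (hg : ∃ m, HasRightSlope g t m) :
    slopeR (fun s => f s - g s) t = slopeR f t - slopeR g t := by
  obtain ⟨m, hm⟩ := hf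
  obtain ⟨m', hm'⟩ := hg
  rw [(hm.sub hm').slopeR_eq, hm.slopeR_eq, hm'.slopeR_eq]

theorem slopeL_sub (hf : ∃ m, HasLeftSlope f t m) (hg : ∃ m, HasLeftSlope g t m) :
    slopeL (fun s => f s - g s) t = slopeL f t - slopeL g t := by
  obtain ⟨m, hm⟩ := hf
  obtain ⟨m', hm'⟩ := hg
  rw [(hm.sub hm').slopeL_eq, hm.slopeL_eq, hm'.slopeL_eq]

theorem hasLeftSlope_iff_hasRightSlope_reflect (L : ℝ) :
    HasLeftSlope f t m ↔ HasRightSlope (fun s => f (L - s)) (L - t) m := by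
  refine exists_congr fun ε => and_congr_right fun _ => ⟨fun h s hs => ?_, fun h s hs => ?_⟩
  · beta_reduce
    rw [h (L - s) ⟨by linarith [hs.2], by linarith [hs.1]⟩, sub_sub_cancel]
    ring
  · have := h (L - s) ⟨by linarith [hs.2], by linarith [hs.1]⟩
    simp only [sub_sub_cancel] at this
    rw [this]
    ring

theorem slopeL_eq_slopeR_reflect (L : ℝ) :
    slopeL f t = slopeR (fun s => f (L - s)) (L - t) := by
  by_cases h : ∃ m, HasLeftSlope f t m
  · obtain ⟨m, hm⟩ := h
    rw [hm.slopeL_eq, ((hasLeftSlope_iff_hasRightSlope_reflect L).mp hm).slopeR_eq]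
  · have h' : ¬ ∃ m, HasRightSlope (fun s => f (L - s)) (L - t) m := by
      simpa only [← hasLeftSlope_iff_hasRightSlope_reflect] using h
    exact (dif_neg h : slopeL f t = 0).trans (dif_neg h' : slopeR _ (L - t) = 0).symm

theorem HasRightSlope.nonneg {b : ℝ} (h : HasRightSlope f t m) (htb : t < b)
    (hmin : ∀ s ∈ Icc t b, f t ≤ f s) : 0 ≤ m := by
  obtain ⟨ε, hε, hf⟩ := h
  set δ := min ε (b - t)
  have hδ : 0 < δ := lt_min hε (by linarith)
  have h1 := hf (t + δ) ⟨by linarith, by linarith [min_le_left ε (b - t)]⟩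
  have h2 := hmin (t + δ) ⟨by linarith, by linarith [min_le_right ε (b - t)]⟩
  have : (0 : ℝ) ≤ m := by nlinarith
  exact_mod_cast this

theorem HasLeftSlope.nonneg {a : ℝ} (h : HasLeftSlope f t m) (hat : a < t)
    (hmin : ∀ s ∈ Icc a t, f t ≤ f s) : 0 ≤ m := by
  obtain ⟨ε, hε, hf⟩ := h
  set δ := min ε (t - a)
  have hδ : 0 < δ := lt_min hε (by linarith)
  have h1 := hf (t - δ) ⟨by linarith [min_le_left ε (t - a)], by linarith⟩
  have h2 := hmin (t - δ) ⟨by linarith [min_le_right ε (t - a)], by linarith⟩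
  have : (0 : ℝ) ≤ m := by nlinarith
  exact_mod_cast this

end OneSidedSlopes

section BreakSets

variable {f g : ℝ → ℝ} {L a b s : ℝ} {m : ℤ} {T T' : Finset ℝ}

def AffOn (f : ℝ → ℝ) (a b : ℝ) (m : ℤ) : Prop :=
  ∀ s ∈ Set.Icc a b, f s = f a + (m : ℝ) * (s - a)

theorem AffOn.mono {a' b' : ℝ} (h : AffOn f a b m) (ha : a ≤ a') (hb : b' ≤ b) :
    AffOn f a' b' m := by
  intro s hs
  rw [h s ⟨ha.trans hs.1, hs.2.trans hb⟩, h a' ⟨ha, (hs.1.trans hs.2).trans hb⟩]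
  ring

theorem AffOn.hasRightSlope (h : AffOn f a b m) (hs : s ∈ Ico a b) : HasRightSlope f s m :=
  ⟨b - s, by linarith [hs.2], fun u hu => by
    rw [h u ⟨hs.1.trans hu.1, by linarith [hu.2]⟩, h s (Ico_subset_Icc_self hs)]
    ring⟩

theorem AffOn.hasLeftSlope (h : AffOn f a b m) (hs : s ∈ Ioc a b) : HasLeftSlope f s (-m) :=
  ⟨s - a, by linarith [hs.1], fun u hu => by
    rw [h u ⟨by linarith [hu.1], hu.2.trans hs.2⟩, h s (Ioc_subset_Icc_self hs)]
    push_cast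
    ring⟩

structure IsBreakSet (f : ℝ → ℝ) (L : ℝ) (T : Finset ℝ) : Prop where
  zero_mem : (0 : ℝ) ∈ T
  len_mem : L ∈ T
  affOn : ∀ a b, 0 ≤ a → a < b → b ≤ L → (∀ u ∈ T, u ∉ Ioo a b) →
    ∃ m : ℤ, AffOn f a b m

namespace IsBreakSet

theorem mono (hT : IsBreakSet f L T) (h : T ⊆ T') : IsBreakSet f L T' :=
  ⟨h hT.zero_mem, h hT.len_mem, fun a b ha hab hb hgap =>
    hT.affOn a b ha hab hb fun u hu => hgap u (h hu)⟩

theorem sub (hf : IsBreakSet f L T) (hg : IsBreakSet g L T') :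
    IsBreakSet (fun s => f s - g s) L (T ∪ T') := by
  refine ⟨Finset.mem_union_left _ hf.zero_mem, Finset.mem_union_left _ hf.len_mem,
    fun a b ha hab hb hgap => ?_⟩
  obtain ⟨m, hm⟩ := (hf.mono Finset.subset_union_left).affOn a b ha hab hb hgap
  obtain ⟨m', hm'⟩ := (hg.mono Finset.subset_union_right).affOn a b ha hab hb hgap
  refine ⟨m - m', fun s hs => ?_⟩
  beta_reduce
  rw [hm s hs, hm' s hs]
  push_cast
  ring

theorem reflect (hT : IsBreakSet f L T) :
    IsBreakSet (fun s => f (L - s)) L (T.image (L - ·)) := by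
  refine ⟨Finset.mem_image.mpr ⟨L, hT.len_mem, sub_self L⟩,
    Finset.mem_image.mpr ⟨0, hT.zero_mem, sub_zero L⟩, fun a b ha hab hb hgap => ?_⟩
  obtain ⟨m, hm⟩ := hT.affOn (L - b) (L - a) (by linarith) (by linarith) (by linarith)
    fun u hu hmem => hgap (L - u) (Finset.mem_image_of_mem _ hu)
      ⟨by linarith [hmem.2], by linarith [hmem.1]⟩
  refine ⟨-m, fun s hs => ?_⟩
  beta_reduce
  rw [hm (L - s) ⟨by linarith [hs.2], by linarith [hs.1]⟩,
    hm (L - a) ⟨by linarith, le_rfl⟩]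
  push_cast
  ring

theorem exists_hasRightSlope (hT : IsBreakSet f L T) (hs : s ∈ Ico 0 L) :
    ∃ m, HasRightSlope f s m := by
  obtain ⟨q, -, hsq, hqL, hgap⟩ := exists_next_mem hT.len_mem hs.2
  obtain ⟨m, hm⟩ := hT.affOn s q hs.1 hsq hqL hgap
  exact ⟨m, hm.hasRightSlope ⟨le_rfl, hsq⟩⟩

theorem exists_hasLeftSlope (hT : IsBreakSet f L T) (hs : s ∈ Ioc 0 L) :
    ∃ m, HasLeftSlope f s m := by
  obtain ⟨p, -, hp0, hps, hgap⟩ := exists_prev_mem hT.zero_mem hs.1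
  obtain ⟨m, hm⟩ := hT.affOn p s hp0 hps hs.2 hgap
  exact ⟨-m, hm.hasLeftSlope ⟨hps, le_rfl⟩⟩

theorem exists_affOn_around (hT : IsBreakSet f L T) (hs : s ∈ Ioo 0 L) (hsT : s ∉ T) :
    ∃ p ∈ T, ∃ q ∈ T, 0 ≤ p ∧ p < s ∧ s < q ∧ q ≤ L ∧ ∃ m, AffOn f p q m := by
  obtain ⟨p, hpT, hp0, hps, hgap⟩ := exists_prev_mem hT.zero_mem hs.1
  obtain ⟨q, hqT, hsq, hqL, hgap'⟩ := exists_next_mem hT.len_mem hs.2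
  refine ⟨p, hpT, q, hqT, hp0, hps, hsq, hqL, hT.affOn p q hp0 (hps.trans hsq) hqL ?_⟩
  intro u hu hmem
  rcases lt_trichotomy u s with hus | rfl | hsu
  exacts [hgap u hu ⟨hmem.1, hus⟩, hsT hu, hgap' u hu ⟨hsu, hmem.2⟩]

theorem slopeR_add_slopeL (hT : IsBreakSet f L T) (hs : s ∈ Ioo 0 L) (hsT : s ∉ T) :
    slopeR f s + slopeL f s = 0 := by
  obtain ⟨p, -, q, -, -, hps, hsq, -, m, hm⟩ := hT.exists_affOn_around hs hsT
  rw [(hm.hasRightSlope ⟨hps.le, hsq⟩).slopeR_eq, (hm.hasLeftSlope ⟨hps, hsq.le⟩).slopeL_eq]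
  ring

theorem exists_isMinOn (hT : IsBreakSet f L T) (hL : 0 ≤ L) :
    ∃ s ∈ Icc 0 L, IsMinOn f (Icc 0 L) s := by
  obtain ⟨s, hs, hmin⟩ := (T.filter (· ∈ Icc 0 L)).exists_min_image f
    ⟨0, Finset.mem_filter.mpr ⟨hT.zero_mem, le_rfl, hL⟩⟩
  obtain ⟨-, hs⟩ := Finset.mem_filter.mp hs
  refine ⟨s, hs, fun x hx => ?_⟩
  by_cases hxT : x ∈ T
  · exact hmin x (Finset.mem_filter.mpr ⟨hxT, hx⟩)
  have hx' : x ∈ Ioo 0 L := ⟨lt_of_le_of_ne hx.1 (by rintro rfl; exact hxT hT.zero_mem),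
    lt_of_le_of_ne hx.2 (by rintro rfl; exact hxT hT.len_mem)⟩
  obtain ⟨p, hpT, q, hqT, hp0, hpx, hxq, hqL, m, hm⟩ := hT.exists_affOn_around hx' hxT
  have hfp := hmin p (Finset.mem_filter.mpr ⟨hpT, hp0, by linarith⟩)
  have hfq := hmin q (Finset.mem_filter.mpr ⟨hqT, by linarith, hqL⟩)
  have hfx := hm x ⟨hpx.le, hxq.le⟩
  have hfq' := hm q ⟨(hpx.trans hxq).le, le_rfl⟩
  show f s ≤ f x
  rcases le_total 0 (m : ℝ) with hm0 | hm0 <;> nlinarith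

theorem exists_slopeR_pos (hT : IsBreakSet f L T) {c : ℝ} (hmin : ∀ x ∈ Icc 0 L, c ≤ f x)
    (ha : 0 ≤ a) (hab : a < b) (hb : b ≤ L) (hfa : f a = c) (hfb : f b ≠ c) :
    ∃ s ∈ Ico a b, f s = c ∧ 0 < slopeR f s := by
  set T' := insert a (insert b T)
  have hT' : IsBreakSet f L T' :=
    hT.mono ((Finset.subset_insert _ _).trans (Finset.subset_insert _ _))
  have hbT' : b ∈ T' := Finset.mem_insert_of_mem (Finset.mem_insert_self _ _)
  -- the exit point is the last node up to which `f` stays at its minimum `c`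
  set S := T'.filter fun u => a ≤ u ∧ u ≤ b ∧ ∀ x ∈ Icc a u, f x = c
  have haS : a ∈ S := Finset.mem_filter.mpr
    ⟨Finset.mem_insert_self _ _, le_rfl, hab.le, fun x hx => by rw [le_antisymm hx.2 hx.1, hfa]⟩
  obtain ⟨hsT', has, hsb, hfs⟩ := Finset.mem_filter.mp (S.max'_mem ⟨a, haS⟩)
  set s := S.max' ⟨a, haS⟩
  have hsb' : s < b := lt_of_le_of_ne hsb fun h => hfb (h ▸ hfs s ⟨has, le_rfl⟩)
  obtain ⟨q, hqT', hsq, hqb, hgap⟩ := exists_next_mem hbT' hsb'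
  obtain ⟨m, hm⟩ := hT'.affOn s q (ha.trans has) hsq (hqb.trans hb) hgap
  have hfs' : f s = c := hfs s ⟨has, le_rfl⟩
  have hm0 : 0 ≤ m := by
    have := hm q ⟨hsq.le, le_rfl⟩
    have := hmin q ⟨by linarith, by linarith⟩
    have : (0 : ℝ) ≤ m := by nlinarith
    exact_mod_cast this
  have hm1 : m ≠ 0 := by
    rintro rfl
    have hqS : q ∈ S := Finset.mem_filter.mpr ⟨hqT', has.trans hsq.le, hqb, fun x hx => by
      rcases le_total x s with hxs | hsx
      · exact hfs x ⟨hx.1, hxs⟩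
      · rw [hm x ⟨hsx, hx.2⟩, hfs']
        simp⟩
    exact (S.le_max' q hqS).not_gt hsq
  refine ⟨s, ⟨has, hsb'⟩, hfs', ?_⟩
  rw [(hm.hasRightSlope ⟨le_rfl, hsq⟩).slopeR_eq]
  exact lt_of_le_of_ne hm0 hm1.symm

theorem exists_slopeL_pos (hT : IsBreakSet f L T) {c : ℝ} (hmin : ∀ x ∈ Icc 0 L, c ≤ f x)
    (ha : 0 ≤ a) (hab : a < b) (hb : b ≤ L) (hfb : f b = c) (hfa : f a ≠ c) :
    ∃ s ∈ Ioc a b, f s = c ∧ 0 < slopeL f s := by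
  obtain ⟨s, hs, hfs, hpos⟩ := hT.reflect.exists_slopeR_pos (c := c)
    (fun x hx => hmin (L - x) ⟨by linarith [hx.2], by linarith [hx.1]⟩)
    (a := L - b) (b := L - a) (by linarith) (by linarith) (by linarith)
    (by simpa using hfb) (by simpa using hfa)
  refine ⟨L - s, ⟨by linarith [hs.2], by linarith [hs.1]⟩, hfs, ?_⟩
  rwa [slopeL_eq_slopeR_reflect L, sub_sub_cancel]

theorem plInt (hT : IsBreakSet f L T) (hL : 0 < L) : PLInt f L := by
  set N := T.filter (· ∈ Icc 0 L)
  have h0N : (0 : ℝ) ∈ N := Finset.mem_filter.mpr ⟨hT.zero_mem, le_rfl, hL.le⟩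
  have hLN : L ∈ N := Finset.mem_filter.mpr ⟨hT.len_mem, hL.le, le_rfl⟩
  obtain ⟨n, hn⟩ := Nat.exists_eq_succ_of_ne_zero (Finset.card_ne_zero_of_mem h0N)
  set t := N.orderEmbOfFin hn
  have htN : ∀ i, t i ∈ Icc 0 L := fun i => (Finset.mem_filter.mp (N.orderEmbOfFin_mem hn i)).2
  have hrange : ∀ x ∈ N, ∃ j, t j = x := fun x hx => by
    rwa [← Finset.mem_coe, ← N.range_orderEmbOfFin hn] at hx
  obtain ⟨j₀, hj₀⟩ := hrange 0 h0N
  obtain ⟨j₁, hj₁⟩ := hrange L hLN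
  refine ⟨n, t, le_antisymm (hj₀ ▸ t.monotone (Fin.zero_le j₀)) (htN 0).1,
    le_antisymm (htN _).2 (hj₁ ▸ t.monotone (Fin.le_last j₁)), t.strictMono, fun i => ?_⟩
  have hlt : t i.castSucc < t i.succ := t.strictMono Fin.castSucc_lt_succ
  refine hT.affOn _ _ (htN _).1 hlt (htN _).2 fun u hu hmem => ?_
  obtain ⟨j, rfl⟩ := hrange u (Finset.mem_filter.mpr
    ⟨hu, (htN _).1.trans hmem.1.le, hmem.2.le.trans (htN _).2⟩)
  have h1 := t.lt_iff_lt.mp hmem.1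
  have h2 := t.lt_iff_lt.mp hmem.2
  rw [Fin.lt_def] at h1 h2
  simp only [Fin.val_castSucc, Fin.val_succ] at h1 h2
  omega

end IsBreakSet

end BreakSets

section PiecewiseLinear

variable {f g : ℝ → ℝ} {L s : ℝ}

theorem isBreakSet_image_of_partition {n : ℕ} {t : Fin (n + 1) → ℝ} (ht0 : t 0 = 0)
    (htL : t (Fin.last n) = L)
    (haff : ∀ i : Fin n, ∃ m, AffOn f (t i.castSucc) (t i.succ) m) :
    IsBreakSet f L (Finset.univ.image t) := by
  refine ⟨Finset.mem_image.mpr ⟨0, Finset.mem_univ _, ht0⟩,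
    Finset.mem_image.mpr ⟨_, Finset.mem_univ _, htL⟩, fun a b ha hab hb hgap => ?_⟩
  set S := Finset.univ.filter (t · ≤ a)
  have h0S : (0 : Fin (n + 1)) ∈ S := Finset.mem_filter.mpr ⟨Finset.mem_univ _, ht0 ▸ ha⟩
  obtain ⟨-, hja⟩ := Finset.mem_filter.mp (S.max'_mem ⟨0, h0S⟩)
  have hlast : S.max' ⟨0, h0S⟩ ≠ Fin.last n := fun h => by
    rw [h, htL] at hja
    linarith
  obtain ⟨i, hi⟩ := Fin.exists_castSucc_eq.mpr hlast
  rw [← hi] at hja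
  have hai : a < t i.succ := by
    by_contra! h
    have := S.le_max' i.succ (Finset.mem_filter.mpr ⟨Finset.mem_univ _, h⟩)
    rw [← hi] at this
    exact this.not_gt Fin.castSucc_lt_succ
  have hbi : b ≤ t i.succ := by
    by_contra! h
    exact hgap _ (Finset.mem_image_of_mem t (Finset.mem_univ _)) ⟨hai, h⟩
  obtain ⟨m, hm⟩ := haff i
  exact ⟨m, hm.mono hja hbi⟩

theorem PLInt.exists_isBreakSet (hf : PLInt f L) : ∃ T, IsBreakSet f L T := by
  obtain ⟨n, t, ht0, htL, -, haff⟩ := hf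
  exact ⟨_, isBreakSet_image_of_partition ht0 htL haff⟩

theorem PLInt.sub (hf : PLInt f L) (hg : PLInt g L) (hL : 0 < L) :
    PLInt (fun s => f s - g s) L := by
  obtain ⟨T, hT⟩ := hf.exists_isBreakSet
  obtain ⟨T', hT'⟩ := hg.exists_isBreakSet
  exact (hT.sub hT').plInt hL

theorem PLInt.exists_hasRightSlope (hf : PLInt f L) (hs : s ∈ Ico 0 L) :
    ∃ m, HasRightSlope f s m :=
  let ⟨_, hT⟩ := hf.exists_isBreakSet
  hT.exists_hasRightSlope hs

theorem PLInt.exists_hasLeftSlope (hf : PLInt f L) (hs : s ∈ Ioc 0 L) :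
    ∃ m, HasLeftSlope f s m :=
  let ⟨_, hT⟩ := hf.exists_isBreakSet
  hT.exists_hasLeftSlope hs

theorem PLInt.slopeR_nonneg (hf : PLInt f L) (hs : s ∈ Ico 0 L)
    (hmin : ∀ x ∈ Icc 0 L, f s ≤ f x) : 0 ≤ slopeR f s := by
  obtain ⟨m, hm⟩ := hf.exists_hasRightSlope hs
  rw [hm.slopeR_eq]
  exact hm.nonneg hs.2 fun x hx => hmin x ⟨hs.1.trans hx.1, hx.2⟩

theorem PLInt.slopeL_nonneg (hf : PLInt f L) (hs : s ∈ Ioc 0 L)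
    (hmin : ∀ x ∈ Icc 0 L, f s ≤ f x) : 0 ≤ slopeL f s := by
  obtain ⟨m, hm⟩ := hf.exists_hasLeftSlope hs
  rw [hm.slopeL_eq]
  exact hm.nonneg hs.1 fun x hx => hmin x ⟨hx.1, hx.2.trans hs.2⟩

theorem PLInt.exists_isMinOn (hf : PLInt f L) (hL : 0 ≤ L) :
    ∃ s ∈ Icc 0 L, IsMinOn f (Icc 0 L) s :=
  let ⟨_, hT⟩ := hf.exists_isBreakSet
  hT.exists_isMinOn hL

theorem PLInt.exists_slopeR_pos (hf : PLInt f L) {a b c : ℝ} (hmin : ∀ x ∈ Icc 0 L, c ≤ f x)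
    (ha : 0 ≤ a) (hab : a < b) (hb : b ≤ L) (hfa : f a = c) (hfb : f b ≠ c) :
    ∃ s ∈ Ico a b, f s = c ∧ 0 < slopeR f s :=
  let ⟨_, hT⟩ := hf.exists_isBreakSet
  hT.exists_slopeR_pos hmin ha hab hb hfa hfb

theorem PLInt.exists_slopeL_pos (hf : PLInt f L) {a b c : ℝ} (hmin : ∀ x ∈ Icc 0 L, c ≤ f x)
    (ha : 0 ≤ a) (hab : a < b) (hb : b ≤ L) (hfb : f b = c) (hfa : f a ≠ c) :
    ∃ s ∈ Ioc a b, f s = c ∧ 0 < slopeL f s :=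
  let ⟨_, hT⟩ := hf.exists_isBreakSet
  hT.exists_slopeL_pos hmin ha hab hb hfb hfa

/-- The principal divisor of `f` on the segment `[0, L]`, evaluated at `s`. -/
noncomputable def outSlope (f : ℝ → ℝ) (L s : ℝ) : ℤ :=
  (if s < L then slopeR f s else 0) + (if 0 < s then slopeL f s else 0)

theorem IsBreakSet.mem_of_outSlope_ne_zero {T : Finset ℝ} (hT : IsBreakSet f L T)
    (hs : s ∈ Icc 0 L) (hne : outSlope f L s ≠ 0) : s ∈ T := by
  by_contra hsT
  have hs' : s ∈ Ioo 0 L := ⟨lt_of_le_of_ne hs.1 (by rintro rfl; exact hsT hT.zero_mem),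
    lt_of_le_of_ne hs.2 (by rintro rfl; exact hsT hT.len_mem)⟩
  rw [outSlope, if_pos hs'.2, if_pos hs'.1] at hne
  exact hne (hT.slopeR_add_slopeL hs' hsT)

theorem PLInt.finsum_outSlope (hf : PLInt f L) : ∑ᶠ s ∈ Icc 0 L, outSlope f L s = 0 := by
  obtain ⟨n, t, ht0, htL, ht, haff⟩ := hf
  have hT := isBreakSet_image_of_partition ht0 htL haff
  have hsupp : Icc 0 L ∩ Function.support (outSlope f L) =
      range t ∩ Function.support (outSlope f L) := by
    ext s
    refine ⟨fun ⟨hs, hne⟩ => ⟨?_, hne⟩,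
      fun ⟨⟨i, hi⟩, hne⟩ => ⟨hi ▸ ⟨?_, ?_⟩, hne⟩⟩
    · simpa using hT.mem_of_outSlope_ne_zero hs hne
    · exact ht0 ▸ ht.monotone (Fin.zero_le i)
    · exact htL ▸ ht.monotone (Fin.le_last i)
  rw [finsum_mem_inter_support_eq _ _ _ hsupp, finsum_mem_range ht.injective,
    finsum_eq_sum_of_fintype]
  have hR : ∑ i, (if t i < L then slopeR f (t i) else 0) =
      ∑ i : Fin n, slopeR f (t i.castSucc) := by
    rw [Fin.sum_univ_castSucc, htL, if_neg (lt_irrefl L), add_zero]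
    exact Finset.sum_congr rfl fun i _ => if_pos (htL ▸ ht (Fin.castSucc_lt_last i))
  have hL : ∑ i, (if 0 < t i then slopeL f (t i) else 0) =
      ∑ i : Fin n, slopeL f (t i.succ) := by
    rw [Fin.sum_univ_succ, ht0, if_neg (lt_irrefl 0), zero_add]
    exact Finset.sum_congr rfl fun i _ => if_pos (ht0 ▸ ht (Fin.succ_pos i))
  -- the slopes of consecutive pieces cancel
  simp only [outSlope]
  rw [Finset.sum_add_distrib, hR, hL, ← Finset.sum_add_distrib]
  refine Finset.sum_eq_zero fun i _ => ?_
  obtain ⟨m, hm : AffOn f _ _ m⟩ := haff i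
  have hlt : t i.castSucc < t i.succ := ht Fin.castSucc_lt_succ
  rw [(hm.hasRightSlope ⟨le_rfl, hlt⟩).slopeR_eq, (hm.hasLeftSlope ⟨hlt, le_rfl⟩).slopeL_eq]
  ring

theorem PLInt.slopeR_zero_add_slopeL_add_finsum_eq_zero (hf : PLInt f L) (hL : 0 < L) :
    slopeR f 0 + slopeL f L +
      ∑ᶠ x : {t : ℝ // 0 < t ∧ t < L}, (slopeR f x + slopeL f x) = 0 := by
  obtain ⟨T, hT⟩ := hf.exists_isBreakSet
  have hfin : ∀ A ⊆ Icc 0 L, (A ∩ Function.support (outSlope f L)).Finite := fun A hA =>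
    T.finite_toSet.subset fun s hs => hT.mem_of_outSlope_ne_zero (hA hs.1) hs.2
  have h := hf.finsum_outSlope
  rw [← Ico_insert_right hL.le, ← Ioo_insert_left hL,
    finsum_mem_insert' _ (by simp [hL.ne']) (hfin _ (Ioo_insert_left hL ▸ Ico_subset_Icc_self)),
    finsum_mem_insert' _ (fun h => h.1.false) (hfin _ Ioo_subset_Icc_self)] at h
  have hint : ∑ᶠ s ∈ Ioo 0 L, outSlope f L s =
      ∑ᶠ x : {t : ℝ // 0 < t ∧ t < L}, (slopeR f x + slopeL f x) := by
    rw [← finsum_set_coe_eq_finsum_mem]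
    exact finsum_congr fun x => by rw [outSlope, if_pos x.2.2, if_pos x.2.1]
  rw [hint, outSlope, outSlope, if_neg (lt_irrefl L), if_pos hL, if_pos hL,
    if_neg (lt_irrefl 0)] at h
  linarith

end PiecewiseLinear

variable {Γ : MetricGraphModel}

namespace RationalFunction

instance : Sub (RationalFunction Γ) where
  sub G F :=
    { vVal := fun v => G.vVal v - F.vVal v
      eFun := fun e s => G.eFun e s - F.eFun e s
      pl := fun e => (G.pl e).sub (F.pl e) (Γ.len_pos e)
      srcVal := fun e => by simp only [G.srcVal, F.srcVal]
      tgtVal := fun e => by simp only [G.tgtVal, F.tgtVal] }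

theorem ratEval_sub (G F : RationalFunction Γ) (p : Γ.Pt) :
    ratEval (G - F) p = ratEval G p - ratEval F p := by
  cases p <;> rfl

theorem ratDiv_sub (G F : RationalFunction Γ) : ratDiv (G - F) = ratDiv G - ratDiv F := by
  have hR : ∀ e, ∀ s ∈ Ico 0 (Γ.len e),
      slopeR ((G - F).eFun e) s = slopeR (G.eFun e) s - slopeR (F.eFun e) s := fun e s hs =>
    slopeR_sub ((G.pl e).exists_hasRightSlope hs) ((F.pl e).exists_hasRightSlope hs)
  have hL : ∀ e, ∀ s ∈ Ioc 0 (Γ.len e),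
      slopeL ((G - F).eFun e) s = slopeL (G.eFun e) s - slopeL (F.eFun e) s := fun e s hs =>
    slopeL_sub ((G.pl e).exists_hasLeftSlope hs) ((F.pl e).exists_hasLeftSlope hs)
  funext p
  rcases p with v | ⟨e, s, hs⟩
  · simp only [ratDiv, Pi.sub_apply, ← Finset.sum_sub_distrib]
    refine Finset.sum_congr rfl fun e _ => ?_
    rw [hR e 0 ⟨le_rfl, Γ.len_pos e⟩, hL e _ ⟨Γ.len_pos e, le_rfl⟩]
    split_ifs <;> ring
  · simp only [ratDiv, Pi.sub_apply]
    rw [hR e s ⟨hs.1.le, hs.2⟩, hL e s ⟨hs.1, hs.2.le⟩]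
    ring

end RationalFunction

theorem divFinSupp_ratDiv (f : RationalFunction Γ) : DivFinSupp (ratDiv f) := by
  choose T hT using fun e => (f.pl e).exists_isBreakSet
  refine ((finite_range Sum.inl).union (finite_iUnion fun e =>
    ((T e).finite_toSet.preimage Subtype.val_injective.injOn).image
      fun k => (Sum.inr ⟨e, k⟩ : Γ.Pt))).subset ?_
  rintro (v | ⟨e, k⟩) hne
  · exact Or.inl ⟨v, rfl⟩
  · refine Or.inr (mem_iUnion.mpr ⟨e, k, ?_, rfl⟩)
    by_contra hk
    exact hne ((hT e).slopeR_add_slopeL k.2 hk)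

theorem divDegree_ratDiv (f : RationalFunction Γ) : divDegree (ratDiv f) = 0 := by
  have hfin := divFinSupp_ratDiv f
  rw [divDegree, finsum_sum_type hfin, finsum_sigma (hfin.preimage Sum.inr_injective.injOn),
    finsum_eq_sum_of_fintype, finsum_eq_sum_of_fintype]
  have hvert : ∑ v, ratDiv f (Sum.inl v) =
      ∑ e, (slopeR (f.eFun e) 0 + slopeL (f.eFun e) (Γ.len e)) := by
    simp only [ratDiv]
    rw [Finset.sum_comm]
    refine Finset.sum_congr rfl fun e _ => ?_
    rw [Finset.sum_add_distrib, Finset.sum_ite_eq, Finset.sum_ite_eq]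
    simp
  rw [hvert, ← Finset.sum_add_distrib]
  exact Finset.sum_eq_zero fun e _ =>
    (f.pl e).slopeR_zero_add_slopeL_add_finsum_eq_zero (Γ.len_pos e)

section Points

variable {e : Γ.E} {p : Γ.Pt} {s : ℝ}

theorem exists_liesOn (e : Γ.E) (hs : s ∈ Icc 0 (Γ.len e)) : ∃ p, LiesOn Γ e p s := by
  rcases hs.1.eq_or_lt with rfl | h0
  · exact ⟨_, Or.inl ⟨rfl, rfl⟩⟩
  rcases hs.2.eq_or_lt with rfl | hL
  · exact ⟨_, Or.inr (Or.inl ⟨rfl, rfl⟩)⟩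
  exact ⟨_, Or.inr (Or.inr ⟨⟨h0, hL⟩, rfl⟩)⟩

theorem LiesOn.mem_Icc (h : LiesOn Γ e p s) : s ∈ Icc 0 (Γ.len e) := by
  rcases h with ⟨-, rfl⟩ | ⟨-, rfl⟩ | ⟨hs, -⟩
  exacts [⟨le_rfl, (Γ.len_pos e).le⟩, ⟨(Γ.len_pos e).le, le_rfl⟩, ⟨hs.1.le, hs.2.le⟩]

theorem LiesOn.ratEval_eq (h : LiesOn Γ e p s) (f : RationalFunction Γ) :
    ratEval f p = f.eFun e s := by
  rcases h with ⟨rfl, rfl⟩ | ⟨rfl, rfl⟩ | ⟨hs, rfl⟩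
  exacts [(f.srcVal e).symm, (f.tgtVal e).symm, rfl]

end Points

namespace RationalFunction

variable (f : RationalFunction Γ) {e : Γ.E} {p q : Γ.Pt} {s : ℝ}

theorem mem_minSet_iff (hp : p ∈ minSet f) : q ∈ minSet f ↔ ratEval f q = ratEval f p :=
  ⟨fun hq => le_antisymm (hq p) (hp q), fun h r => h ▸ hp r⟩

theorem le_eFun_of_mem_minSet (hp : p ∈ minSet f) (e : Γ.E) :
    ∀ s ∈ Icc 0 (Γ.len e), ratEval f p ≤ f.eFun e s := fun _ hs =>
  let ⟨_, hq⟩ := exists_liesOn e hs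
  hq.ratEval_eq f ▸ hp _

theorem exists_mem_minSet [Nonempty Γ.V] : ∃ p, p ∈ minSet f := by
  choose s hs hmin using fun e => (f.pl e).exists_isMinOn (Γ.len_pos e).le
  let val : Γ.V ⊕ Γ.E → ℝ := Sum.elim f.vVal fun e => f.eFun e (s e)
  obtain ⟨k, -, hk⟩ := Finset.univ.exists_min_image val
    ⟨Sum.inl (Classical.arbitrary Γ.V), Finset.mem_univ _⟩
  obtain ⟨p, hp⟩ : ∃ p, ratEval f p = val k := by
    rcases k with v | e
    · exact ⟨Sum.inl v, rfl⟩
    · obtain ⟨p, hp⟩ := exists_liesOn e (hs e)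
      exact ⟨p, hp.ratEval_eq f⟩
  refine ⟨p, fun q => hp ▸ ?_⟩
  rcases q with v | ⟨e, t, ht⟩
  · exact hk (Sum.inl v) (Finset.mem_univ _)
  · exact (hk (Sum.inr e) (Finset.mem_univ _)).trans (hmin e ⟨ht.1.le, ht.2.le⟩)

theorem slopeR_nonneg (hp : p ∈ minSet f) (hl : LiesOn Γ e p s) (hs : s < Γ.len e) :
    0 ≤ slopeR (f.eFun e) s :=
  (f.pl e).slopeR_nonneg ⟨hl.mem_Icc.1, hs⟩ fun _ hx =>
    hl.ratEval_eq f ▸ f.le_eFun_of_mem_minSet hp e _ hx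

theorem slopeL_nonneg (hp : p ∈ minSet f) (hl : LiesOn Γ e p s) (hs : 0 < s) :
    0 ≤ slopeL (f.eFun e) s :=
  (f.pl e).slopeL_nonneg ⟨hs, hl.mem_Icc.2⟩ fun _ hx =>
    hl.ratEval_eq f ▸ f.le_eFun_of_mem_minSet hp e _ hx

noncomputable def edgeDiv (e : Γ.E) : Γ.Pt → ℤ
  | Sum.inl v => (if Γ.src e = v then slopeR (f.eFun e) 0 else 0) +
      (if Γ.tgt e = v then slopeL (f.eFun e) (Γ.len e) else 0)
  | Sum.inr q => if q.1 = e then slopeR (f.eFun q.1) q.2.1 + slopeL (f.eFun q.1) q.2.1 else 0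

theorem ratDiv_eq_sum_edgeDiv (p : Γ.Pt) : ratDiv f p = ∑ e, f.edgeDiv e p := by
  rcases p with v | q
  · rfl
  · simp [edgeDiv, ratDiv]

theorem edgeDiv_nonneg (hp : p ∈ minSet f) (e : Γ.E) : 0 ≤ f.edgeDiv e p := by
  rcases p with v | ⟨e', t, ht⟩
  · refine add_nonneg ?_ ?_ <;> split_ifs with h
    exacts [f.slopeR_nonneg hp (Or.inl ⟨h ▸ rfl, rfl⟩) (Γ.len_pos e), le_rfl,
      f.slopeL_nonneg hp (Or.inr (Or.inl ⟨h ▸ rfl, rfl⟩)) (Γ.len_pos e), le_rfl]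
  · simp only [edgeDiv]
    split_ifs with h
    · subst h
      have hl : LiesOn Γ e' (Sum.inr ⟨e', t, ht⟩) t := Or.inr (Or.inr ⟨ht, rfl⟩)
      exact add_nonneg (f.slopeR_nonneg hp hl ht.2) (f.slopeL_nonneg hp hl ht.1)
    · exact le_rfl

theorem sum_edgeDiv_le_ratDiv (hp : p ∈ minSet f) (P : Finset Γ.E) :
    ∑ e ∈ P, f.edgeDiv e p ≤ ratDiv f p := by
  rw [ratDiv_eq_sum_edgeDiv]
  exact Finset.sum_le_sum_of_subset_of_nonneg (Finset.subset_univ P)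
    fun e _ _ => f.edgeDiv_nonneg hp e

theorem outSlope_le_edgeDiv (hq : q ∈ minSet f) (hl : LiesOn Γ e q s) :
    outSlope (f.eFun e) (Γ.len e) s ≤ f.edgeDiv e q := by
  have hL := Γ.len_pos e
  rcases hl with ⟨rfl, rfl⟩ | ⟨rfl, rfl⟩ | ⟨hs, rfl⟩
  · simp only [outSlope, edgeDiv, if_pos hL, lt_irrefl, if_false, if_true, add_zero]
    split_ifs with h
    exacts [le_add_of_nonneg_right (f.slopeL_nonneg hq (Or.inr (Or.inl ⟨h ▸ rfl, rfl⟩)) hL),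
      (add_zero _).ge]
  · simp only [outSlope, edgeDiv, if_pos hL, lt_irrefl, if_false, if_true, zero_add]
    split_ifs with h
    exacts [le_add_of_nonneg_left (f.slopeR_nonneg hq (Or.inl ⟨h ▸ rfl, rfl⟩) hL),
      (zero_add _).ge]
  · simp [outSlope, edgeDiv, hs.1, hs.2]

end RationalFunction

theorem exists_crossing_of_isWalk (P : Γ.V → Prop) :
    ∀ {l : List (Γ.E × Bool)} {u v : Γ.V}, IsWalk Γ l u v → P u → ¬ P v →
      ∃ x ∈ l, P (Γ.dSrc x) ∧ ¬ P (Γ.dTgt x)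
  | [], _, _, huv, hu, hv => absurd (huv ▸ hu) hv
  | x :: l, _, _, ⟨hx, hl⟩, hu, hv => by
    by_cases hx' : P (Γ.dTgt x)
    · obtain ⟨y, hy, hy'⟩ := exists_crossing_of_isWalk P hl hx' hv
      exact ⟨y, List.mem_cons_of_mem x hy, hy'⟩
    · exact ⟨x, List.mem_cons_self, hx ▸ hu, hx'⟩

noncomputable def cut (Γ : MetricGraphModel) (P : Γ.V → Prop) : Finset Γ.E :=
  Finset.univ.filter fun e => ¬ (P (Γ.src e) ↔ P (Γ.tgt e))

theorem mem_cut {P : Γ.V → Prop} {e : Γ.E} :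
    e ∈ Γ.cut P ↔ ¬ (P (Γ.src e) ↔ P (Γ.tgt e)) := by
  simp [cut]

theorem ThreeEdgeConnected.three_le_card_cut (h3 : Γ.ThreeEdgeConnected) (P : Γ.V → Prop)
    {u v : Γ.V} (hu : P u) (hv : ¬ P v) : 3 ≤ (Γ.cut P).card := by
  by_contra! hcard
  obtain ⟨l, hl, havoid⟩ := h3 (Γ.cut P) (by omega) u v
  obtain ⟨⟨e, b⟩, hx, hsrc, htgt⟩ := exists_crossing_of_isWalk P hl hu hv
  refine havoid _ hx (mem_cut.mpr ?_)
  cases b <;> simp_all [dSrc, dTgt]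

section MinSet

variable (h : RationalFunction Γ) {E : Divisor Γ}

theorem sum_le_divDegree (hE : DivEffective E) (hEfin : DivFinSupp E) (W : Finset Γ.Pt) :
    ∑ p ∈ W, E p ≤ divDegree E := by
  have hsub : Function.support E ⊆ ↑(hEfin.toFinset ∪ W) := fun q hq =>
    Finset.mem_coe.mpr (Finset.mem_union_left _ (hEfin.mem_toFinset.mpr hq))
  rw [divDegree, finsum_eq_sum_of_support_subset _ hsub]
  exact Finset.sum_le_sum_of_subset_of_nonneg Finset.subset_union_right fun p _ _ => hE p

theorem exists_one_le_edgeDiv {e : Γ.E}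
    (hcut : ¬ (Sum.inl (Γ.src e) ∈ minSet h ↔ Sum.inl (Γ.tgt e) ∈ minSet h)) :
    ∃ q ∈ minSet h, 1 ≤ h.edgeDiv e q := by
  have hL := Γ.len_pos e
  obtain ⟨p₀, hp₀, s, hfs, hexit⟩ :
      ∃ p₀ ∈ minSet h, ∃ s, h.eFun e s = ratEval h p₀ ∧
      ((s ∈ Ico 0 (Γ.len e) ∧ 0 < slopeR (h.eFun e) s) ∨
        (s ∈ Ioc 0 (Γ.len e) ∧ 0 < slopeL (h.eFun e) s)) := by
    by_cases hsrc : Sum.inl (Γ.src e) ∈ minSet h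
    · have htgt : Sum.inl (Γ.tgt e) ∉ minSet h := fun h' => hcut (iff_of_true hsrc h')
      obtain ⟨s, hs, hfs, hpos⟩ := (h.pl e).exists_slopeR_pos (h.le_eFun_of_mem_minSet hsrc e)
        le_rfl hL le_rfl (h.srcVal e)
        fun hf => htgt ((h.mem_minSet_iff hsrc).mpr ((h.tgtVal e).symm.trans hf))
      exact ⟨_, hsrc, s, hfs, Or.inl ⟨⟨hs.1, hs.2⟩, hpos⟩⟩
    · have htgt : Sum.inl (Γ.tgt e) ∈ minSet h := by tauto
      obtain ⟨s, hs, hfs, hpos⟩ := (h.pl e).exists_slopeL_pos (h.le_eFun_of_mem_minSet htgt e)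
        le_rfl hL le_rfl (h.tgtVal e)
        fun hf => hsrc ((h.mem_minSet_iff htgt).mpr ((h.srcVal e).symm.trans hf))
      exact ⟨_, htgt, s, hfs, Or.inr ⟨⟨hs.1, hs.2⟩, hpos⟩⟩
  have hs : s ∈ Icc 0 (Γ.len e) := by
    rcases hexit with ⟨hs, -⟩ | ⟨hs, -⟩
    exacts [Ico_subset_Icc_self hs, Ioc_subset_Icc_self hs]
  obtain ⟨q, hq⟩ := exists_liesOn e hs
  have hqmin : q ∈ minSet h := (h.mem_minSet_iff hp₀).mpr ((hq.ratEval_eq h).trans hfs)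
  refine ⟨q, hqmin, le_trans ?_ (h.outSlope_le_edgeDiv hqmin hq)⟩
  rcases hexit with ⟨⟨hs0, hsL⟩, hpos⟩ | ⟨⟨hs0, hsL⟩, hpos⟩
  · have := h.slopeL_nonneg hqmin hq
    rw [outSlope, if_pos hsL]
    split_ifs with h0
    · linarith [this h0]
    · linarith
  · have := h.slopeR_nonneg hqmin hq
    rw [outSlope, if_pos hs0]
    split_ifs with h0
    · linarith [this h0]
    · linarith

theorem card_le_divDegree (hE : DivEffective E) (hEfin : DivFinSupp E)
    (hle : ∀ p, ratDiv h p ≤ E p) (C : Finset Γ.E)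
    (hC : ∀ e ∈ C, ∃ q ∈ minSet h, 1 ≤ h.edgeDiv e q) :
    (C.card : ℤ) ≤ divDegree E := by
  rcases C.eq_empty_or_nonempty with rfl | ⟨e₀, he₀⟩
  · simpa using sum_le_divDegree hE hEfin ∅
  have : Nonempty Γ.Pt := ⟨(hC e₀ he₀).choose⟩
  choose! q hqmin hq using hC
  calc (C.card : ℤ) = ∑ e ∈ C, 1 := by simp
    _ ≤ ∑ e ∈ C, h.edgeDiv e (q e) := Finset.sum_le_sum hq
    _ = ∑ p ∈ C.image q, ∑ e ∈ C with q e = p, h.edgeDiv e p :=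
      (Finset.sum_fiberwise_of_maps_to (fun e he => Finset.mem_image_of_mem q he) _).symm.trans
        (Finset.sum_congr rfl fun p _ => Finset.sum_congr rfl fun e he =>
          by rw [(Finset.mem_filter.mp he).2])
    _ ≤ ∑ p ∈ C.image q, E p := Finset.sum_le_sum fun p hp => by
      obtain ⟨e, he, rfl⟩ := Finset.mem_image.mp hp
      exact (h.sum_edgeDiv_le_ratDiv (hqmin e he) _).trans (hle _)
    _ ≤ divDegree E := sum_le_divDegree hE hEfin _

theorem inl_mem_minSet_of_inl_mem (h3 : Γ.ThreeEdgeConnected) (hE : DivEffective E)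
    (hEfin : DivFinSupp E) (hdeg : divDegree E ≤ 2) (hle : ∀ p, ratDiv h p ≤ E p) {u : Γ.V}
    (hu : Sum.inl u ∈ minSet h) (v : Γ.V) : Sum.inl v ∈ minSet h := by
  by_contra hv
  have h3cut := h3.three_le_card_cut (fun w => Sum.inl w ∈ minSet h) hu hv
  have := card_le_divDegree h hE hEfin hle (Γ.cut fun w => Sum.inl w ∈ minSet h) fun e he =>
    exists_one_le_edgeDiv h (mem_cut.mp he)
  omega

theorem exists_inl_mem_minSet (hE : DivEffective E) (hEfin : DivFinSupp E)
    (hdeg : divDegree E ≤ 2) (hle : ∀ p, ratDiv h p ≤ E p) {x : Γ.V}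
    (hx : 1 ≤ E (Sum.inl x)) : ∃ v, Sum.inl v ∈ minSet h := by
  by_contra! hno
  have : Nonempty Γ.V := ⟨x⟩
  obtain ⟨p₀, hp₀⟩ := h.exists_mem_minSet
  rcases p₀ with v | ⟨e, s₀, hs₀⟩
  · exact hno v hp₀
  have hmin := h.le_eFun_of_mem_minSet hp₀ e
  have hsrc : h.eFun e 0 ≠ h.eFun e s₀ := fun hf =>
    hno _ ((h.mem_minSet_iff hp₀).mpr ((h.srcVal e).symm.trans hf))
  have htgt : h.eFun e (Γ.len e) ≠ h.eFun e s₀ := fun hf =>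
    hno _ ((h.mem_minSet_iff hp₀).mpr ((h.tgtVal e).symm.trans hf))
  obtain ⟨a, ha, hfa, hpa⟩ := (h.pl e).exists_slopeL_pos hmin le_rfl hs₀.1 hs₀.2.le rfl hsrc
  obtain ⟨b, hb, hfb, hpb⟩ := (h.pl e).exists_slopeR_pos hmin hs₀.1.le hs₀.2 le_rfl rfl htgt
  have haI : a ∈ Ioo 0 (Γ.len e) := ⟨ha.1, ha.2.trans_lt hs₀.2⟩
  have hbI : b ∈ Ioo 0 (Γ.len e) := ⟨hs₀.1.trans_le hb.1, hb.2⟩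
  have hRa := (h.pl e).slopeR_nonneg ⟨haI.1.le, haI.2⟩ (hfa ▸ hmin)
  have hLb := (h.pl e).slopeL_nonneg ⟨hbI.1, hbI.2.le⟩ (hfb ▸ hmin)
  have hEa := hle (Sum.inr ⟨e, a, haI⟩)
  have hEb := hle (Sum.inr ⟨e, b, hbI⟩)
  have hsum := sum_le_divDegree hE hEfin
    (insert (Sum.inl x) {Sum.inr ⟨e, a, haI⟩, Sum.inr ⟨e, b, hbI⟩})
  rw [Finset.sum_insert (by simp)] at hsum
  simp only [ratDiv] at hEa hEb
  rcases (ha.2.trans hb.1).eq_or_lt with rfl | hab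
  · simp only [Finset.mem_singleton, Finset.insert_eq_of_mem, Finset.sum_singleton] at hsum
    omega
  · rw [Finset.sum_pair (by simp [Subtype.ext_iff, hab.ne])] at hsum
    omega

theorem inl_mem_minSet (h3 : Γ.ThreeEdgeConnected) (hE : DivEffective E)
    (hEfin : DivFinSupp E) (hdeg : divDegree E ≤ 2) (hle : ∀ p, ratDiv h p ≤ E p) {x : Γ.V}
    (hx : 1 ≤ E (Sum.inl x)) (v : Γ.V) : Sum.inl v ∈ minSet h :=
  let ⟨_, hu⟩ := exists_inl_mem_minSet h hE hEfin hdeg hle hx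
  inl_mem_minSet_of_inl_mem h h3 hE hEfin hdeg hle hu v

end MinSet

theorem ratDiv_eq_zero_of_ratEval_eq {f : RationalFunction Γ} {c : ℝ}
    (hc : ∀ p, ratEval f p = c) : ratDiv f = 0 := by
  have hconst : ∀ e, AffOn (f.eFun e) 0 (Γ.len e) 0 := fun e s hs => by
    obtain ⟨p, hp⟩ := exists_liesOn e hs
    obtain ⟨q, hq⟩ := exists_liesOn e ⟨le_rfl, (Γ.len_pos e).le⟩
    rw [← hp.ratEval_eq, ← hq.ratEval_eq, hc, hc]
    simp
  have hR : ∀ e, ∀ s ∈ Ico 0 (Γ.len e), slopeR (f.eFun e) s = 0 := fun e s hs =>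
    ((hconst e).hasRightSlope hs).slopeR_eq
  have hL : ∀ e, ∀ s ∈ Ioc 0 (Γ.len e), slopeL (f.eFun e) s = 0 := fun e s hs =>
    ((hconst e).hasLeftSlope hs).slopeL_eq
  funext p
  rcases p with v | ⟨e, s, hs⟩
  · refine Finset.sum_eq_zero fun e _ => ?_
    rw [hR e 0 ⟨le_rfl, Γ.len_pos e⟩, hL e _ ⟨Γ.len_pos e, le_rfl⟩]
    simp
  · simp only [ratDiv, Pi.zero_apply]
    rw [hR e s ⟨hs.1.le, hs.2⟩, hL e s ⟨hs.1, hs.2.le⟩, add_zero]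

section Divisors

variable {D : Divisor Γ}

theorem divFinSupp_sub_ratDiv (hD : DivFinSupp D) (f : RationalFunction Γ) :
    DivFinSupp (D - ratDiv f) :=
  (hD.union (divFinSupp_ratDiv f)).subset (Function.support_sub _ _)

theorem divDegree_sub_ratDiv (hD : DivFinSupp D) (f : RationalFunction Γ) :
    divDegree (D - ratDiv f) = divDegree D := by
  rw [divDegree, Pi.sub_def, finsum_sub_distrib hD (divFinSupp_ratDiv f), ← divDegree,
    ← divDegree, divDegree_ratDiv, sub_zero]

theorem divFinSupp_unitDiv (p : Γ.Pt) : DivFinSupp (unitDiv Γ p) :=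
  (finite_singleton p).subset fun _ hq => by_contra fun h => hq (if_neg h)

theorem divDegree_unitDiv (p : Γ.Pt) : divDegree (unitDiv Γ p) = 1 := by
  rw [divDegree, finsum_eq_single (unitDiv Γ p) p fun q hq => if_neg hq, unitDiv, if_pos rfl]

theorem divEffective_unitDiv (p : Γ.Pt) : DivEffective (unitDiv Γ p) := fun q => by
  unfold unitDiv
  split_ifs <;> norm_num

theorem RankGE.exists_effective_sub_ratDiv (hD : RankGE Γ D 1) (p : Γ.Pt) :
    ∃ f : RationalFunction Γ, DivEffective (D - ratDiv f) ∧ 1 ≤ (D - ratDiv f) p := by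
  obtain ⟨B, hB, -, f, hf⟩ := hD (unitDiv Γ p) (divEffective_unitDiv p) (divFinSupp_unitDiv p)
    (by rw [divDegree_unitDiv, Nat.cast_one])
  have hDf : ∀ q, (D - ratDiv f) q = B q + unitDiv Γ p q := fun q => by
    rw [Pi.sub_apply]
    linarith [hf q]
  refine ⟨f, fun q => hDf q ▸ add_nonneg (hB q) (divEffective_unitDiv p q), ?_⟩
  rw [hDf, unitDiv, if_pos rfl]
  linarith [hB p]

theorem ratDiv_eq_of_effective (h3 : Γ.ThreeEdgeConnected) (hD : DivFinSupp D)
    (hdeg : divDegree D ≤ 2) {f g : RationalFunction Γ} {u w : Γ.V}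
    (hf : DivEffective (D - ratDiv f)) (hfu : 1 ≤ (D - ratDiv f) (Sum.inl u))
    (hg : DivEffective (D - ratDiv g)) (hgw : 1 ≤ (D - ratDiv g) (Sum.inl w)) :
    ratDiv f = ratDiv g := by
  have hle : ∀ {f g : RationalFunction Γ}, DivEffective (D - ratDiv g) →
      ∀ p, ratDiv (g - f) p ≤ (D - ratDiv f) p := fun hg p => by
    have := hg p
    simp only [RationalFunction.ratDiv_sub, Pi.sub_apply] at this ⊢
    linarith
  have hmin := inl_mem_minSet (g - f) h3 hf (divFinSupp_sub_ratDiv hD f)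
    ((divDegree_sub_ratDiv hD f).trans_le hdeg) (hle hg) hfu u
  have hmax := inl_mem_minSet (f - g) h3 hg (divFinSupp_sub_ratDiv hD g)
    ((divDegree_sub_ratDiv hD g).trans_le hdeg) (hle hf) hgw u
  have hconst : ∀ p, ratEval (g - f) p = ratEval (g - f) (Sum.inl u) := fun p => by
    have h1 := hmin p
    have h2 := hmax p
    simp only [RationalFunction.ratEval_sub] at h1 h2 ⊢
    linarith
  have := ratDiv_eq_zero_of_ratEval_eq hconst
  rw [RationalFunction.ratDiv_sub, sub_eq_zero] at this
  exact this.symm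

end Divisors

end MetricGraphModel

theorem threeEdgeConnected_not_hyperelliptic_general
    (Γ : MetricGraphModel) (hcard : 3 ≤ Fintype.card Γ.V)
    (h3ec : Γ.ThreeEdgeConnected) :
    ¬ ∃ D : MetricGraphModel.Divisor Γ,
        MetricGraphModel.DivFinSupp D ∧ MetricGraphModel.divDegree D = 2 ∧
        MetricGraphModel.RankGE Γ D 1 := by
  rintro ⟨D, hDfin, hDdeg, hrank⟩
  obtain ⟨x, y, z, hxy, hxz, hyz⟩ := Fintype.two_lt_card_iff.mp hcard
  choose f hf hfv using fun v : Γ.V => hrank.exists_effective_sub_ratDiv (Sum.inl v)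
  have hrep : ∀ v, ratDiv (f v) = ratDiv (f x) := fun v =>
    ratDiv_eq_of_effective h3ec hDfin hDdeg.le (hf v) (hfv v) (hf x) (hfv x)
  have hsum := sum_le_divDegree (hf x) (divFinSupp_sub_ratDiv hDfin (f x))
    {Sum.inl x, Sum.inl y, Sum.inl z}
  rw [Finset.sum_insert (by simp [hxy, hxz]), Finset.sum_pair (by simpa using hyz),
    divDegree_sub_ratDiv hDfin, hDdeg] at hsum
  have hy := hfv y
  have hz := hfv z
  rw [hrep] at hy hz
  linarith [hfv x]

/-- A `3`-edge connected metric graph whose canonical model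
has at least `3` vertices is not divisorially hyperelliptic: no divisor of
degree `2` has rank at least `1`. -/
theorem threeEdgeConnected_not_hyperelliptic
    (Γ : MetricGraphModel) (hcan : Γ.IsCanonical) (hcard : 3 ≤ Fintype.card Γ.V)
    (h3ec : Γ.ThreeEdgeConnected) :
    ¬ ∃ D : MetricGraphModel.Divisor Γ,
        MetricGraphModel.DivFinSupp D ∧ MetricGraphModel.divDegree D = 2 ∧
        MetricGraphModel.RankGE Γ D 1 :=
  threeEdgeConnected_not_hyperelliptic_general Γ hcard h3ec
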